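/- Let d ≥ 4, N ≥ 0 and p be integers with 0 < p < d−2, and let λ ∈ ℝ^N. Then the gravitational wall form w^G_{1;23} = 2e₁ + Σ_{l=4}^d e_l on ℝ^{d+N} is the sum of one electric and one magnetic wall form of the p-form: w^G_{1;23} = w_E + w_M, where w_E = e₁ + e₄ + e₅ + … + e_{p+2} + (1/2)Σ_α λ_α φ_α (an electric wall form on the p indices {1,4,…,p+2}) and w_M = e₁ + e_{p+3} + … + e_d − (1/2)Σ_α λ_α φ_α (a magnetic wall form on the d−p−1 indices {1, p+3,…,d}). -/
import Mathlib

theorem gravitational_is_electric_plus_magnetic (d N p : ℕ) (hd : 4 ≤ d)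
    (hp0 : 0 < p) (hp : p < d - 2) (lam : Fin N → ℝ)
    (wG wE wM : (Fin d → ℝ) × (Fin N → ℝ))
    (hG : wG = (fun l => if l.val = 0 then 2 else if 3 ≤ l.val then 1 else 0,
      fun _ => 0))
    (hE : wE = (fun l => if l.val = 0 ∨ (3 ≤ l.val ∧ l.val ≤ p + 1) then 1 else 0,
      fun α => lam α / 2))
    (hM : wM = (fun l => if l.val = 0 ∨ p + 2 ≤ l.val then 1 else 0,
      fun α => -lam α / 2)) :
    wG = wE + wM := by
  subst hG hE hM
  refine Prod.ext (funext fun l => ?_) (funext fun α => ?_)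
  · simp only [Prod.fst_add, Pi.add_apply]
    rcases Nat.eq_zero_or_pos l.val with h0 | h0
    · simp [h0]; norm_num
    · have h1 : l.val ≠ 0 := by omega
      rcases Nat.lt_or_ge l.val 3 with h3 | h3
      · have ha : ¬ (3 ≤ l.val ∧ l.val ≤ p + 1) := by omega
        have h2 : ¬ p + 2 ≤ l.val := by omega
        have h4 : ¬ 3 ≤ l.val := by omega
        simp [h1, ha, h2, h4]
      · rcases Nat.lt_or_ge l.val (p + 2) with hlt | hge
        · have ha : 3 ≤ l.val ∧ l.val ≤ p + 1 := by omega
          have h2 : ¬ p + 2 ≤ l.val := by omega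
          simp [h1, h3, ha, h2]
        · have ha : ¬ l.val ≤ p + 1 := by omega
          simp [h1, h3, ha, hge]
  · simp only [Prod.snd_add, Pi.add_apply]; ring
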